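/- arXiv:1806.04959 — 3 statements merged into one kernel-verified Lean document; each statement's English description precedes it below -/
import Mathlib

section
/- Let 0 < α < 1. For any two benefit vectors b, b' ∈ ℝⁿ with strictly positive entries, the Atkinson index satisfies A_{1−α}(b) ≥ A_{1−α}(b') if and only if the generalized entropy index satisfies G_α(b) ≥ G_α(b'). (Note: no equal-mean assumption is needed; the key identity is A_{1−α}(b) = 1 − (α(α−1)·G_α(b) + 1)^{1/α}.) -/
open Finset

/-- Atkinson index with parameter `1 − α` (for `0 < α < 1`):
`A_{1−α}(b) = 1 − (1/μ)·((1/n)Σᵢ bᵢ^α)^{1/α}` where `μ = (1/n)Σᵢ bᵢ`. -/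
noncomputable def atkinson' {n : ℕ} (α : ℝ) (b : Fin n → ℝ) : ℝ :=
  1 - (1 / ((∑ i, b i) / n)) * (((∑ i, b i ^ α) / n) ^ (1 / α))

/-- Generalized entropy index:
`G_α(b) = (1/(nα(α−1)))·Σᵢ ((bᵢ/μ)^α − 1)` where `μ = (1/n)Σᵢ bᵢ`. -/
noncomputable def genEntropy {n : ℕ} (α : ℝ) (b : Fin n → ℝ) : ℝ :=
  (1 / (n * α * (α - 1))) * ∑ i, ((b i / ((∑ j, b j) / n)) ^ α - 1)

lemma key_pos {n : ℕ} (hn : 0 < n) {α : ℝ} (hα0 : 0 < α)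
    (b : Fin n → ℝ) (hb : ∀ i, 0 < b i) :
    0 < (∑ i, b i ^ α) / (n : ℝ) := by
  have hn' : (0:ℝ) < n := Nat.cast_pos.2 hn
  have : 0 < ∑ i, b i ^ α :=
    Finset.sum_pos (fun i _ => Real.rpow_pos_of_pos (hb i) α) ⟨⟨0, hn⟩, mem_univ _⟩
  exact div_pos this hn'

lemma key_id {n : ℕ} (hn : 0 < n) {α : ℝ} (hα0 : 0 < α) (hα1 : α < 1)
    (b : Fin n → ℝ) (hb : ∀ i, 0 < b i) :
    α * (α - 1) * genEntropy α b + 1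
      = ((∑ i, b i ^ α) / n) / (((∑ i, b i) / n) ^ α) := by
  have hn' : (0:ℝ) < n := Nat.cast_pos.2 hn
  have hμ : 0 < (∑ i, b i) / (n:ℝ) :=
    div_pos (Finset.sum_pos (fun i _ => hb i) ⟨⟨0, hn⟩, mem_univ _⟩) hn'
  set μ := (∑ i, b i) / (n:ℝ) with hμdef
  have hμα : 0 < μ ^ α := Real.rpow_pos_of_pos hμ α
  have hsum : ∑ i, ((b i / μ) ^ α - 1)
      = (∑ i, b i ^ α) / μ ^ α - n := by
    rw [Finset.sum_sub_distrib]
    simp only [Finset.sum_const, card_univ, Fintype.card_fin, nsmul_eq_mul, mul_one]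
    congr 1
    rw [Finset.sum_div]
    refine Finset.sum_congr rfl fun i _ => ?_
    rw [Real.div_rpow (hb i).le hμ.le]
  unfold genEntropy
  rw [← hμdef, hsum]
  have hα1' : α - 1 ≠ 0 := by linarith
  field_simp
  ring

lemma atkinson_eq {n : ℕ} (hn : 0 < n) {α : ℝ} (hα0 : 0 < α) (hα1 : α < 1)
    (b : Fin n → ℝ) (hb : ∀ i, 0 < b i) :
    atkinson' α b = 1 - (α * (α - 1) * genEntropy α b + 1) ^ (1 / α) := by
  have hn' : (0:ℝ) < n := Nat.cast_pos.2 hn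
  have hμ : 0 < (∑ i, b i) / (n:ℝ) :=
    div_pos (Finset.sum_pos (fun i _ => hb i) ⟨⟨0, hn⟩, mem_univ _⟩) hn'
  rw [key_id hn hα0 hα1 b hb]
  unfold atkinson'
  have hS : 0 ≤ (∑ i, b i ^ α) / (n:ℝ) := (key_pos hn hα0 b hb).le
  rw [Real.div_rpow hS (Real.rpow_pos_of_pos hμ α).le]
  have hexp : (((∑ i, b i) / (n:ℝ)) ^ α) ^ (1/α) = ((∑ i, b i) / (n:ℝ)) := by
    rw [← Real.rpow_mul hμ.le, mul_one_div, div_self hα0.ne', Real.rpow_one]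
  rw [hexp]
  field_simp

/-- For `0 < α < 1` and positive vectors `b, b'`,
`A_{1−α}(b) ≥ A_{1−α}(b')` iff `G_α(b) ≥ G_α(b')`. -/
theorem stmt_2 (n : ℕ) (hn : 0 < n) (α : ℝ) (hα0 : 0 < α) (hα1 : α < 1)
    (b b' : Fin n → ℝ) (hb : ∀ i, 0 < b i) (hb' : ∀ i, 0 < b' i) :
    atkinson' α b ≥ atkinson' α b' ↔ genEntropy α b ≥ genEntropy α b' := by
  have hc : α * (α - 1) < 0 := mul_neg_of_pos_of_neg hα0 (by linarith)
  have hP : 0 < α * (α - 1) * genEntropy α b + 1 := by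
    rw [key_id hn hα0 hα1 b hb]
    exact div_pos (key_pos hn hα0 b hb)
      (Real.rpow_pos_of_pos (div_pos (Finset.sum_pos (fun i _ => hb i) ⟨⟨0, hn⟩, mem_univ _⟩)
        (Nat.cast_pos.2 hn)) α)
  have hP' : 0 < α * (α - 1) * genEntropy α b' + 1 := by
    rw [key_id hn hα0 hα1 b' hb']
    exact div_pos (key_pos hn hα0 b' hb')
      (Real.rpow_pos_of_pos (div_pos (Finset.sum_pos (fun i _ => hb' i) ⟨⟨0, hn⟩, mem_univ _⟩)
        (Nat.cast_pos.2 hn)) α)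
  rw [atkinson_eq hn hα0 hα1 b hb, atkinson_eq hn hα0 hα1 b' hb', ge_iff_le,
    sub_le_sub_iff_left,
    Real.rpow_le_rpow_iff hP.le hP'.le (by positivity : (0:ℝ) < 1/α),
    add_le_add_iff_right]
  constructor
  · intro h
    exact le_of_mul_le_mul_left (by linarith [mul_le_mul_of_nonpos_left h hc.le]) (by linarith : 0 < -(α*(α-1)))
  · intro h
    have := mul_le_mul_of_nonpos_left h hc.le
    linarith
end

section
/- For any b ∈ ℝⁿ with positive entries and 0 < α < 1, the identity A_{1−α}(b) = 1 − (α(α−1)·G_α(b) + 1)^{1/α} holds, where A is the Atkinson index and G the generalized entropy index. -/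
open Finset

/-- Identity `A_{1−α}(b) = 1 − (α(α−1)·G_α(b) + 1)^{1/α}` for positive `b`, `0 < α < 1`. -/
theorem stmt_3 (n : ℕ) (hn : 0 < n) (α : ℝ) (hα0 : 0 < α) (hα1 : α < 1)
    (b : Fin n → ℝ) (hb : ∀ i, 0 < b i) :
    atkinson' α b = 1 - (α * (α - 1) * genEntropy α b + 1) ^ (1 / α) := by
  have hn' : (0:ℝ) < n := by exact_mod_cast hn
  have hα : α ≠ 0 := ne_of_gt hα0
  have hα1' : α - 1 ≠ 0 := by linarith
  set S : ℝ := ∑ i, b i with hS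
  have hSpos : 0 < S := Finset.sum_pos (fun i _ => hb i) (univ_nonempty_iff.2 ⟨⟨0, hn⟩⟩)
  set μ : ℝ := S / n with hμ
  have hμpos : 0 < μ := div_pos hSpos hn'
  set Sα : ℝ := ∑ i, b i ^ α with hSα
  have hSαpos : 0 < Sα :=
    Finset.sum_pos (fun i _ => Real.rpow_pos_of_pos (hb i) α) (univ_nonempty_iff.2 ⟨⟨0, hn⟩⟩)
  have key : α * (α - 1) * genEntropy α b + 1 = Sα / (n * μ ^ α) := by
    have hsum : ∑ i, ((b i / μ) ^ α - 1) = Sα / μ ^ α - n := by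
      rw [Finset.sum_sub_distrib]
      simp only [Finset.sum_const, Finset.card_univ, Fintype.card_fin, nsmul_eq_mul, mul_one]
      congr 1
      rw [Finset.sum_div]
      exact Finset.sum_congr rfl fun i _ => Real.div_rpow (hb i).le hμpos.le α
    rw [genEntropy, hsum]
    have hμα : (0:ℝ) < μ ^ α := Real.rpow_pos_of_pos hμpos α
    field_simp
    ring
  rw [key, atkinson']
  have : Sα / (n * μ ^ α) = (Sα / n) / μ ^ α := by ring
  rw [this, Real.div_rpow (by positivity) (Real.rpow_pos_of_pos hμpos α).le,
    ← Real.rpow_mul hμpos.le, mul_one_div, div_self hα, Real.rpow_one]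
  rw [← hS, ← hSα, ← hμ, one_div μ, ← div_eq_inv_mul]
end

section
/- Consider the constrained least squares problem: minimize Σᵢ₌₁ⁿ (θ·xᵢ − yᵢ)² over θ ∈ ℝᵏ subject to Σᵢ₌₁ⁿ (θ·xᵢ − yᵢ + 1)^α ≥ τn, where 0 < α < 1, τ > 1, the last coordinate of every xᵢ equals 1 (intercept), and there exists θ* with yᵢ = θ*·xᵢ for all i. Then θ' = θ* + τ'·e_k with τ' = τ^{1/α} − 1 is an optimal solution; in particular θ' is feasible (satisfying the constraint with equality) and its objective value n·(τ^{1/α} − 1)² is minimal among all feasible θ. -/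
open Finset

/-- Constrained least squares: minimize `Σᵢ (θ·xᵢ − yᵢ)²` subject to
`Σᵢ (θ·xᵢ − yᵢ + 1)^α ≥ τn`. If every `xᵢ` has `p`-th (intercept) coordinate `1`
and `θ*` fits the data exactly, then `θ' = θ* + (τ^{1/α} − 1)·e_p` satisfies the
constraint with equality, has objective value `n·(τ^{1/α} − 1)²`, and this value
is minimal among all feasible `θ` (with nonnegative benefits). -/
theorem stmt_10 (n k : ℕ) (x : Fin n → Fin k → ℝ) (y : Fin n → ℝ)
    (θstar : Fin k → ℝ) (p : Fin k) (hx : ∀ i, x i p = 1)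
    (hfit : ∀ i, ∑ j, θstar j * x i j = y i)
    (α τ : ℝ) (hα0 : 0 < α) (hα1 : α < 1) (hτ : 1 < τ)
    (θ' : Fin k → ℝ)
    (hθ' : θ' = fun j => θstar j + (τ ^ (1/α) - 1) * (if j = p then 1 else 0)) :
    (∑ i, ((∑ j, θ' j * x i j) - y i + 1) ^ α = τ * n) ∧
    (∑ i, ((∑ j, θ' j * x i j) - y i) ^ 2 = n * (τ ^ (1/α) - 1) ^ 2) ∧
    (∀ θ : Fin k → ℝ,
      (∀ i, 0 ≤ (∑ j, θ j * x i j) - y i + 1) →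
      (∑ i, ((∑ j, θ j * x i j) - y i + 1) ^ α ≥ τ * n) →
      n * (τ ^ (1/α) - 1) ^ 2 ≤ ∑ i, ((∑ j, θ j * x i j) - y i) ^ 2) := by
  have hτ0 : (0:ℝ) < τ := lt_trans one_pos hτ
  set c : ℝ := τ ^ (1/α) with hc
  have hc1 : 1 < c := Real.one_lt_rpow_iff_of_pos hτ0 |>.2 (Or.inl ⟨hτ, by positivity⟩)
  have hc0 : 0 < c := lt_trans one_pos hc1
  have hcα : c ^ α = τ := by
    rw [hc, ← Real.rpow_mul hτ0.le, one_div_mul_cancel hα0.ne', Real.rpow_one]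
  have key : ∀ i, (∑ j, θ' j * x i j) = y i + (c - 1) := by
    intro i
    subst hθ'
    simp only [add_mul, Finset.sum_add_distrib, hfit i, mul_assoc, ite_mul, one_mul, zero_mul,
      mul_ite, mul_zero, Finset.sum_ite_eq', Finset.mem_univ, if_true, hx i, mul_one]
  refine ⟨?_, ?_, ?_⟩
  · have : ∀ i : Fin n, ((∑ j, θ' j * x i j) - y i + 1) ^ α = τ := by
      intro i
      have h : y i + (c - 1) - y i + 1 = c := by ring
      rw [key i, h, hcα]
    rw [Finset.sum_congr rfl fun i _ => this i, Finset.sum_const, Finset.card_univ,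
      Fintype.card_fin, nsmul_eq_mul, mul_comm]
  · have : ∀ i : Fin n, ((∑ j, θ' j * x i j) - y i) ^ 2 = (c - 1) ^ 2 := by
      intro i; rw [key i]; ring
    rw [Finset.sum_congr rfl fun i _ => this i, Finset.sum_const, Finset.card_univ,
      Fintype.card_fin, nsmul_eq_mul]
  · intro θ hnn hcon
    set b : Fin n → ℝ := fun i => (∑ j, θ j * x i j) - y i + 1 with hbdef
    have hpt : ∀ i, b i ^ α ≤ τ * (1 + α * (b i / c - 1)) := by
      intro i
      have hbc : -1 ≤ b i / c - 1 := by
        have : 0 ≤ b i / c := div_nonneg (hnn i) hc0.le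
        linarith
      have hbern := rpow_one_add_le_one_add_mul_self hbc hα0.le hα1.le
      have hsplit : b i ^ α = c ^ α * (b i / c) ^ α := by
        rw [← Real.mul_rpow hc0.le (div_nonneg (hnn i) hc0.le),
          mul_div_cancel₀ _ hc0.ne']
      rw [hsplit, hcα]
      have : ((1 : ℝ) + (b i / c - 1)) ^ α ≤ 1 + α * (b i / c - 1) := hbern
      have h2 : (b i / c) ^ α ≤ 1 + α * (b i / c - 1) := by
        simpa using this
      exact mul_le_mul_of_nonneg_left h2 hτ0.le
    have hsum1 : τ * n ≤ ∑ i, b i ^ α := hcon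
    have hsum2 : ∑ i, b i ^ α ≤ τ * (n + α * ((∑ i, b i) / c - n)) := by
      calc ∑ i, b i ^ α ≤ ∑ i, τ * (1 + α * (b i / c - 1)) :=
            Finset.sum_le_sum fun i _ => hpt i
        _ = τ * (n + α * ((∑ i, b i) / c - n)) := by
            rw [← Finset.mul_sum]
            congr 1
            rw [Finset.sum_add_distrib, Finset.sum_const, ← Finset.mul_sum,
              Finset.sum_sub_distrib, Finset.sum_const, ← Finset.sum_div]
            simp
    have hS : (n : ℝ) * c ≤ ∑ i, b i := by
      have h3 : (n : ℝ) ≤ n + α * ((∑ i, b i) / c - n) := by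
        have := le_trans hsum1 hsum2
        nlinarith
      have h4 : (n : ℝ) ≤ (∑ i, b i) / c := by nlinarith
      calc (n : ℝ) * c ≤ ((∑ i, b i) / c) * c := by nlinarith
        _ = ∑ i, b i := by field_simp
    -- Cauchy–Schwarz
    have hd : (n : ℝ) * (c - 1) ≤ ∑ i, (b i - 1) := by
      rw [Finset.sum_sub_distrib, Finset.sum_const]
      simp only [Finset.card_univ, Fintype.card_fin, nsmul_eq_mul, mul_one]
      nlinarith
    have hcs : (∑ i, (b i - 1)) ^ 2 ≤ (n : ℝ) * ∑ i, (b i - 1) ^ 2 := by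
      have := sq_sum_le_card_mul_sum_sq (s := Finset.univ) (f := fun i => b i - 1)
      simpa using this
    have hobj : ∑ i, ((∑ j, θ j * x i j) - y i) ^ 2 = ∑ i, (b i - 1) ^ 2 := by
      apply Finset.sum_congr rfl; intro i _; rw [hbdef]; ring
    rw [hobj]
    rcases Nat.eq_zero_or_pos n with hn | hn
    · subst hn; simp
    have hn0 : (0:ℝ) < n := Nat.cast_pos.mpr hn
    have hnc : (0:ℝ) ≤ n * (c - 1) := by nlinarith
    have h5 : ((n : ℝ) * (c - 1)) ^ 2 ≤ (∑ i, (b i - 1)) ^ 2 := by nlinarith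
    nlinarith [le_trans h5 hcs]
end
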